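/- Let v = a·e₁ + b·e₂ be a primitive vector in the A₂ lattice (Gram matrix [[2,1],[1,2]]). Then a primitive generator u of the orthogonal complement v⊥ satisfies u² = v²/3 if 3 divides v², and u² = 3·v² otherwise. -/

import Mathlib

/-- The bilinear form of the A₂ lattice on ℤ × ℤ (Gram matrix [[2,1],[1,2]]). -/
def A2form (v w : ℤ × ℤ) : ℤ := 2*v.1*w.1 + 2*v.2*w.2 + v.1*w.2 + v.2*w.1

/-- A vector of the A₂ lattice is primitive if its coordinates are coprime. -/
def A2Primitive (v : ℤ × ℤ) : Prop := Int.gcd v.1 v.2 = 1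

/-!
The vector `w = (a + 2b, -(2a + b))` is orthogonal to `v = (a, b)` and `w² = 3 v²`, so the
primitive generator `u` of `v⊥` is `±w / g` with `g` the gcd of the coordinates of `w`.
As `g ∣ 3a` and `g ∣ 3b`, primitivity of `v` forces `g ∣ 3`, and `3 ∣ g` exactly when
`a ≡ b (mod 3)`, i.e. when `3 ∣ v² = 2((a - b)² + 3ab)`. Hence `g² u² = 3 v²` with `g = 3`
or `g = 1` according as `3 ∣ v²` or not.
-/

/-- Rotation by a quarter turn in the A₂ lattice, up to the factor `√3`. -/
def A2perp (v : ℤ × ℤ) : ℤ × ℤ := (v.1 + 2*v.2, -(2*v.1 + v.2))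

lemma A2form_smul_smul (k : ℤ) (u : ℤ × ℤ) :
    A2form (k • u) (k • u) = k^2 * A2form u u := by
  simp only [A2form, Prod.smul_fst, Prod.smul_snd, smul_eq_mul]; ring

lemma A2form_A2perp_left (v : ℤ × ℤ) : A2form (A2perp v) v = 0 := by
  simp only [A2form, A2perp]; ring

lemma A2form_A2perp_self (v : ℤ × ℤ) : A2form (A2perp v) (A2perp v) = 3 * A2form v v := by
  simp only [A2form, A2perp]; ring

lemma three_dvd_A2form_self_iff (v : ℤ × ℤ) : 3 ∣ A2form v v ↔ 3 ∣ v.1 - v.2 := by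
  have hform : A2form v v = 2 * (v.1 - v.2)^2 + 6 * (v.1 * v.2) := by simp only [A2form]; ring
  rw [hform, ← (Int.prime_three.dvd_pow_iff_dvd two_ne_zero : 3 ∣ (v.1 - v.2)^2 ↔ _)]
  generalize (v.1 - v.2)^2 = s
  omega

lemma gcd_A2perp_dvd_three {v : ℤ × ℤ} (hv : A2Primitive v) :
    Int.gcd (A2perp v).1 (A2perp v).2 ∣ 3 := by
  have hp := Int.gcd_dvd_left (A2perp v).1 (A2perp v).2
  have hq := Int.gcd_dvd_right (A2perp v).1 (A2perp v).2
  have h1 : 3 * v.1 = -(A2perp v).1 - 2 * (A2perp v).2 := by simp only [A2perp]; ring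
  have h2 : 3 * v.2 = 2 * (A2perp v).1 + (A2perp v).2 := by simp only [A2perp]; ring
  have := Int.dvd_coe_gcd (h1 ▸ hp.neg_right.sub (hq.mul_left 2)) (h2 ▸ (hp.mul_left 2).add hq)
  rw [Int.gcd_mul_left, show Int.gcd v.1 v.2 = 1 from hv] at this
  exact_mod_cast this

lemma three_dvd_gcd_A2perp_iff (v : ℤ × ℤ) :
    3 ∣ Int.gcd (A2perp v).1 (A2perp v).2 ↔ 3 ∣ A2form v v := by
  rw [three_dvd_A2form_self_iff, ← Int.natCast_dvd_natCast, Int.dvd_coe_gcd_iff]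
  simp only [A2perp]
  omega

lemma gcd_A2perp {v : ℤ × ℤ} (hv : A2Primitive v) :
    Int.gcd (A2perp v).1 (A2perp v).2 = if 3 ∣ A2form v v then 3 else 1 := by
  have hdvd := three_dvd_gcd_A2perp_iff v
  rcases (Nat.dvd_prime Nat.prime_three).mp (gcd_A2perp_dvd_three hv) with h | h <;>
    rw [h] at hdvd ⊢ <;> simp [← hdvd]

lemma gcd_smul_of_primitive (k : ℤ) {u : ℤ × ℤ} (hu : A2Primitive u) :
    Int.gcd (k • u).1 (k • u).2 = k.natAbs := by
  simp only [Prod.smul_fst, Prod.smul_snd, smul_eq_mul, Int.gcd_mul_left,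
    show Int.gcd u.1 u.2 = 1 from hu, mul_one]

theorem stmt_0_general (v u : ℤ × ℤ) (hv : A2Primitive v) (hu : A2Primitive u)
    (hgen : ∀ w : ℤ × ℤ, A2form w v = 0 → ∃ k : ℤ, w = k • u) :
    (3 ∣ A2form v v → 3 * A2form u u = A2form v v) ∧
    (¬ 3 ∣ A2form v v → A2form u u = 3 * A2form v v) := by
  obtain ⟨k, hk⟩ := hgen (A2perp v) (A2form_A2perp_left v)
  have hkey :
      ((if 3 ∣ A2form v v then 3 else 1 : ℕ) : ℤ)^2 * A2form u u = 3 * A2form v v := by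
    rw [← gcd_A2perp hv, ← A2form_A2perp_self, hk, gcd_smul_of_primitive k hu,
      Int.natAbs_sq, A2form_smul_smul]
  refine ⟨fun h3 => ?_, fun h3 => ?_⟩ <;>
    simp only [h3, if_true, if_false, Nat.cast_ofNat, Nat.cast_one] at hkey <;> linarith

theorem stmt_0 (v u : ℤ × ℤ) (hv : A2Primitive v) (hu : A2Primitive u)
    (horth : A2form u v = 0)
    (hgen : ∀ w : ℤ × ℤ, A2form w v = 0 → ∃ k : ℤ, w = k • u) :
    (3 ∣ A2form v v → 3 * A2form u u = A2form v v) ∧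
    (¬ 3 ∣ A2form v v → A2form u u = 3 * A2form v v) :=
  stmt_0_general v u hv hu hgen
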